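/- Let d ≥ 1 and let F : ℝ^d → ℝ^d be a locally Lipschitz single-valued cyclically quasi-monotone map with F(x) ≠ 0 for every x ∈ ℝ^d. Let p ∈ ℝ^d, let K be a compact subset of the topological boundary of C^F(p), and let T > 0. Then for every ε > 0 there exists δ₀ > 0 such that: for every 0 < δ ≤ δ₀ and every finite tuple of points x_0, …, x_n ∈ K with n·δ ≤ 2T and |x_{i+1} − x_i| = δ for every 0 ≤ i ≤ n−1, there exist points x̃_0, …, x̃_n ∈ ℝ^d with x̃_0 = x_0, |x̃_i − x_i| ≤ ε for every 0 ≤ i ≤ n, and (x̃_{i+1} − x̃_i)·F(x̃_i) > 0 for every 0 ≤ i ≤ n−1. -/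

import Mathlib

open scoped RealInnerProductSpace

/-- Cyclic quasi-monotonicity of a single-valued map `F : ℝ^d → ℝ^d`. -/
def CyclicallyQuasiMonotoneS {d : ℕ}
    (F : EuclideanSpace ℝ (Fin d) → EuclideanSpace ℝ (Fin d)) : Prop :=
  ∀ (N : ℕ) (x : ℕ → EuclideanSpace ℝ (Fin d)),
    0 < N → x N = x 0 →
    ∃ i < N, ⟪F (x i), x (i + 1) - x i⟫ ≤ 0

/-- `a ≺_F b`: there is an `F`-ascending path from `a` to `b`. -/
def PrecS {d : ℕ} (F : EuclideanSpace ℝ (Fin d) → EuclideanSpace ℝ (Fin d))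
    (a b : EuclideanSpace ℝ (Fin d)) : Prop :=
  ∃ (N : ℕ) (x : ℕ → EuclideanSpace ℝ (Fin d)),
    0 < N ∧ x 0 = a ∧ x N = b ∧ ∀ i < N, 0 < ⟪F (x i), x (i + 1) - x i⟫

/-- `a ⪯_F b`: `{w : w ≺_F a} ⊆ {w : w ≺_F b}`. -/
def PreceqS {d : ℕ} (F : EuclideanSpace ℝ (Fin d) → EuclideanSpace ℝ (Fin d))
    (a b : EuclideanSpace ℝ (Fin d)) : Prop :=
  ∀ w, PrecS F w a → PrecS F w b

/-- The convex set `C^F(x) = {w : w ⪯_F x}`. -/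
def CS {d : ℕ} (F : EuclideanSpace ℝ (Fin d) → EuclideanSpace ℝ (Fin d))
    (x : EuclideanSpace ℝ (Fin d)) : Set (EuclideanSpace ℝ (Fin d)) :=
  {w | PreceqS F w x}

open Filter Topology Metric
open scoped NNReal

/-!
A point `w ∉ C^F(p)` has a witness `u ≺_F w` with `u ⊀_F p`, so an ascending step from `w` to
some `v ∈ C^F(p)` would give `u ≺_F v`: hence `⟪F w, v - w⟫ ≤ 0`, and by continuity this persists
on the boundary of the closed set `C^F(p)`. Consecutive points of a chain in `K` therefore satisfy
`⟪F x_{i+1}, x_{i+1} - x_i⟫ ≥ 0`, so the chain is ascending up to an error `O(δ²)` coming from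
the Lipschitz bound on `F`. Pushing `x_i` along `F x_i` by a radius with
`η_{i+1} - η_i = A δ (η_i + δ)` turns this error into a gain, and `η_i ≤ δ e^{A n δ} ≤ δ e^{2AT}`
keeps the perturbation of size `O(δ)`.
-/

section AscendingPaths

variable {d : ℕ} {F : EuclideanSpace ℝ (Fin d) → EuclideanSpace ℝ (Fin d)}
  {a b c p : EuclideanSpace ℝ (Fin d)}

lemma PrecS.snoc (h : PrecS F a b) (hc : 0 < ⟪F b, c - b⟫) : PrecS F a c := by
  obtain ⟨N, z, hN, rfl, rfl, hz⟩ := h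
  refine ⟨N + 1, fun i => if i ≤ N then z i else c, N.succ_pos, by simp, by simp, fun i hi => ?_⟩
  rcases (Nat.lt_succ_iff.1 hi).lt_or_eq with hi | rfl
  · simpa [hi.le, Nat.succ_le_of_lt hi] using hz i hi
  · simpa using hc

lemma isOpen_setOf_precS (F : EuclideanSpace ℝ (Fin d) → EuclideanSpace ℝ (Fin d))
    (a : EuclideanSpace ℝ (Fin d)) : IsOpen {b | PrecS F a b} := by
  refine isOpen_iff_mem_nhds.2 fun b ⟨N, z, hN, hz0, hzN, hz⟩ => ?_
  obtain ⟨k, rfl⟩ : ∃ k, N = k + 1 := ⟨N - 1, by omega⟩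
  have hopen : IsOpen {c | 0 < ⟪F (z k), c - z k⟫} :=
    isOpen_lt continuous_const (continuous_const.inner (continuous_id.sub continuous_const))
  have hb : 0 < ⟪F (z k), b - z k⟫ := hzN ▸ hz k k.lt_succ_self
  refine Filter.mem_of_superset (hopen.mem_nhds hb) fun c hc =>
    ⟨k + 1, Function.update z (k + 1) c, hN, by simp [hz0], by simp, fun i hi => ?_⟩
  rcases (Nat.lt_succ_iff.1 hi).lt_or_eq with hi | rfl
  · simpa [Function.update_of_ne (Nat.succ_lt_succ hi).ne, Function.update_of_ne
      (hi.trans k.lt_succ_self).ne] using hz i (hi.trans k.lt_succ_self)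
  · simpa using hc

lemma isClosed_CS (F : EuclideanSpace ℝ (Fin d) → EuclideanSpace ℝ (Fin d))
    (p : EuclideanSpace ℝ (Fin d)) : IsClosed (CS F p) := by
  have hcompl : (CS F p)ᶜ = ⋃ a ∈ {a | ¬ PrecS F a p}, {b | PrecS F a b} := by
    ext b
    simp [CS, PreceqS, and_comm]
  rw [← isOpen_compl_iff, hcompl]
  exact isOpen_biUnion fun a _ => isOpen_setOf_precS F a

lemma inner_le_zero_of_mem_CS_of_notMem (ha : a ∈ CS F p) (hb : b ∉ CS F p) :
    ⟪F b, a - b⟫ ≤ 0 := by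
  by_contra! hab
  obtain ⟨w, hwb, hwp⟩ : ∃ w, PrecS F w b ∧ ¬ PrecS F w p := by
    simpa [CS, PreceqS] using hb
  exact hwp (ha w (hwb.snoc hab))

lemma inner_sub_nonneg_of_mem_frontier_CS (hF : Continuous F) (ha : a ∈ frontier (CS F p))
    (hb : b ∈ frontier (CS F p)) : 0 ≤ ⟪F b, b - a⟫ := by
  have haC : a ∈ CS F p := (isClosed_CS F p).frontier_subset ha
  have hclosed : IsClosed {y | ⟪F y, a - y⟫ ≤ 0} :=
    isClosed_le (hF.inner (continuous_const.sub continuous_id)) continuous_const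
  have hb' : b ∈ closure (CS F p)ᶜ := by rw [closure_compl]; exact hb.2
  have hab : ⟪F b, a - b⟫ ≤ 0 :=
    closure_minimal (fun y hy => inner_le_zero_of_mem_CS_of_notMem haC hy) hclosed hb'
  rw [← neg_sub, inner_neg_right]
  linarith

end AscendingPaths

def perturbRadius (A δ : ℝ) (i : ℕ) : ℝ := δ * ((1 + A * δ) ^ i - 1)

section PerturbRadius

variable {A δ : ℝ}

@[simp] lemma perturbRadius_zero : perturbRadius A δ 0 = 0 := by simp [perturbRadius]

lemma perturbRadius_succ (i : ℕ) :
    perturbRadius A δ (i + 1) = perturbRadius A δ i + A * δ * (perturbRadius A δ i + δ) := by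
  simp only [perturbRadius, pow_succ]
  ring

lemma perturbRadius_nonneg (hA : 0 ≤ A) (hδ : 0 ≤ δ) (i : ℕ) : 0 ≤ perturbRadius A δ i :=
  mul_nonneg hδ (sub_nonneg.2 (one_le_pow₀ (le_add_of_nonneg_right (by positivity))))

lemma perturbRadius_add_le_exp (hA : 0 ≤ A) (hδ : 0 ≤ δ) (i : ℕ) :
    perturbRadius A δ i + δ ≤ δ * Real.exp (A * (i * δ)) := by
  have hpow : (1 + A * δ) ^ i ≤ Real.exp (A * (i * δ)) := by
    calc (1 + A * δ) ^ i ≤ Real.exp (A * δ) ^ i := by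
          gcongr
          linarith [Real.add_one_le_exp (A * δ)]
      _ = Real.exp (A * (i * δ)) := by rw [← Real.exp_nat_mul]; ring_nf
  calc perturbRadius A δ i + δ = δ * (1 + A * δ) ^ i := by rw [perturbRadius]; ring
    _ ≤ δ * Real.exp (A * (i * δ)) := by gcongr

end PerturbRadius

lemma LocallyLipschitz.exists_bounds_on_cthickening {α β : Type*} [PseudoMetricSpace α]
    [ProperSpace α] [NormedAddCommGroup β] {F : α → β}
    (hF : LocallyLipschitz F) (hF0 : ∀ x, F x ≠ 0) {K : Set α} (hK : IsCompact K) :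
    ∃ (L : ℝ≥0) (m M : ℝ), 0 < m ∧ 0 < M ∧ LipschitzOnWith L F (cthickening 1 K) ∧
      (∀ z ∈ cthickening 1 K, m ≤ ‖F z‖) ∧ ∀ z ∈ cthickening 1 K, ‖F z‖ ≤ M := by
  have hS : IsCompact (cthickening 1 K) := hK.cthickening
  obtain ⟨L, hL⟩ := hF.locallyLipschitzOn.exists_lipschitzOnWith_of_compact hS
  obtain ⟨m, hm, hmF⟩ := hS.exists_forall_le' hF.continuous.norm.continuousOn
    fun z _ => norm_pos_iff.2 (hF0 z)
  obtain ⟨M, hM, hMF⟩ :=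
    (hS.image_of_continuousOn hF.continuous.continuousOn).isBounded.exists_pos_norm_le
  exact ⟨L, m, M, hm, hM, hL, hmF, fun z hz => hMF _ (Set.mem_image_of_mem F hz)⟩

section Perturbation

variable {E : Type*} [NormedAddCommGroup E] [InnerProductSpace ℝ E]

lemma inner_perturbed_step_pos {F : E → E} {S : Set E} {L : ℝ≥0} {m M : ℝ}
    (hF : LipschitzOnWith L F S) (hm : 0 ≤ m) (hmF : ∀ z ∈ S, m ≤ ‖F z‖)
    (hMF : ∀ z ∈ S, ‖F z‖ ≤ M) {a b : E} {δ s A : ℝ} (ha : a ∈ S) (hb : b ∈ S)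
    (has : a + s • F a ∈ S) (hab : 0 ≤ ⟪F b, b - a⟫) (hδ : 0 < δ) (hba : ‖b - a‖ ≤ δ)
    (hs : 0 ≤ s) (hsmall : L * M * (M * s + δ) ≤ m ^ 2 / 2)
    (hA : A * m ^ 2 = 4 * L * (M + 1) + 2) :
    0 < ⟪F (a + s • F a), (b + (s + A * δ * (s + δ)) • F b) - (a + s • F a)⟫ := by
  set c := F (a + s • F a)
  have hM : 0 ≤ M := (norm_nonneg _).trans (hMF a ha)
  have hca : ‖c - F a‖ ≤ L * (M * s) := by
    calc ‖c - F a‖ ≤ L * ‖a + s • F a - a‖ := by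
          simpa only [dist_eq_norm] using hF.dist_le_mul _ has _ ha
      _ = L * (s * ‖F a‖) := by rw [add_sub_cancel_left, norm_smul, Real.norm_of_nonneg hs]
      _ ≤ L * (M * s) := by rw [mul_comm s]; gcongr; exact hMF a ha
  have hFba : ‖F b - F a‖ ≤ L * δ := by
    calc ‖F b - F a‖ ≤ L * ‖b - a‖ := by simpa only [dist_eq_norm] using hF.dist_le_mul _ hb _ ha
      _ ≤ L * δ := by gcongr
  have hcb : ‖c - F b‖ ≤ L * (M * s + δ) := by
    calc ‖c - F b‖ = ‖(c - F a) - (F b - F a)‖ := by rw [sub_sub_sub_cancel_right]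
      _ ≤ ‖c - F a‖ + ‖F b - F a‖ := norm_sub_le _ _
      _ ≤ L * (M * s + δ) := by rw [mul_add]; exact add_le_add hca hFba
  have hchord : -(L * (M * s + δ) * δ) ≤ ⟪c, b - a⟫ := by
    have := (abs_le.1 ((abs_real_inner_le_norm (c - F b) (b - a)).trans
      (mul_le_mul hcb hba (norm_nonneg _) (by positivity)))).1
    rw [inner_sub_left] at this
    linarith
  have hdrift : -(M * (L * δ)) ≤ ⟪c, F b - F a⟫ :=
    (abs_le.1 ((abs_real_inner_le_norm c _).trans
      (mul_le_mul (hMF _ has) hFba (norm_nonneg _) hM))).1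
  have hpush : m ^ 2 / 2 ≤ ⟪c, F b⟫ := by
    have h1 := (abs_le.1 ((abs_real_inner_le_norm (c - F b) (F b)).trans
      (mul_le_mul hcb (hMF b hb) (norm_nonneg _) (by positivity)))).1
    have h2 : m ^ 2 ≤ ⟪F b, F b⟫ := by
      rw [real_inner_self_eq_norm_sq]; gcongr; exact hmF b hb
    rw [inner_sub_left] at h1
    nlinarith
  have hA0 : 0 < A := pos_of_mul_pos_left (by rw [hA]; positivity) (sq_nonneg m)
  have hsplit : (b + (s + A * δ * (s + δ)) • F b) - (a + s • F a)
      = (b - a) + s • (F b - F a) + (A * δ * (s + δ)) • F b := by module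
  rw [hsplit, inner_add_right, inner_add_right, real_inner_smul_right, real_inner_smul_right]
  have h1 : s * -(M * (L * δ)) ≤ s * ⟪c, F b - F a⟫ := mul_le_mul_of_nonneg_left hdrift hs
  have h2 : A * δ * (s + δ) * (m ^ 2 / 2) ≤ A * δ * (s + δ) * ⟪c, F b⟫ :=
    mul_le_mul_of_nonneg_left hpush (by positivity)
  have h3 : A * δ * (s + δ) * (m ^ 2 / 2) = (2 * L * (M + 1) + 1) * δ * (s + δ) := by
    linear_combination δ * (s + δ) / 2 * hA
  have hgain : 0 < L * δ * (2 * M * δ + 2 * s + δ) + δ * (s + δ) := by positivity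
  linarith

theorem exists_ascending_perturbation [ProperSpace E] {F : E → E} (hF : LocallyLipschitz F)
    (hF0 : ∀ x, F x ≠ 0) {K : Set E} (hK : IsCompact K)
    (hKF : ∀ a ∈ K, ∀ b ∈ K, 0 ≤ ⟪F b, b - a⟫) (T : ℝ) :
    ∀ ε > 0, ∃ δ₀ > 0, ∀ δ : ℝ, 0 < δ → δ ≤ δ₀ →
      ∀ (n : ℕ) (x : ℕ → E), (∀ i ≤ n, x i ∈ K) → (n : ℝ) * δ ≤ T →
        (∀ i < n, ‖x (i + 1) - x i‖ ≤ δ) →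
        ∃ y : ℕ → E, y 0 = x 0 ∧ (∀ i ≤ n, ‖y i - x i‖ ≤ ε) ∧
          ∀ i < n, 0 < ⟪F (y i), y (i + 1) - y i⟫ := by
  intro ε hε
  obtain ⟨L, m, M, hm, hM, hL, hmF, hMF⟩ := hF.exists_bounds_on_cthickening hF0 hK
  set A := (4 * L * (M + 1) + 2) / m ^ 2
  have hA : A * m ^ 2 = 4 * L * (M + 1) + 2 := div_mul_cancel₀ _ (by positivity)
  have hA0 : 0 ≤ A := by positivity
  obtain ⟨ρ, ⟨hρε, hρm⟩, hρ⟩ : ∃ ρ : ℝ,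
      (M * ρ < min ε 1 ∧ L * M * (M + 1) * ρ < m ^ 2 / 2) ∧ 0 < ρ := by
    have hlim (C : ℝ) : Tendsto (fun ρ : ℝ => C * ρ) (𝓝[>] 0) (𝓝 0) :=
      ((continuous_const_mul C).tendsto' 0 0 (mul_zero C)).mono_left nhdsWithin_le_nhds
    exact (((hlim M).eventually_lt_const (lt_min hε one_pos)).and
      ((hlim _).eventually_lt_const (by positivity))).and self_mem_nhdsWithin |>.exists
  refine ⟨ρ / Real.exp (A * T), by positivity, fun δ hδ hδ₀ n x hxK hnT hstep => ?_⟩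
  set η := perturbRadius A δ
  have hη0 := perturbRadius_nonneg hA0 hδ.le
  have hη (i : ℕ) (hi : i ≤ n) : η i + δ ≤ ρ := calc
    η i + δ ≤ δ * Real.exp (A * (i * δ)) := perturbRadius_add_le_exp hA0 hδ.le i
    _ ≤ δ * Real.exp (A * T) := by gcongr; exact (by gcongr : (i : ℝ) * δ ≤ n * δ).trans hnT
    _ ≤ ρ := (le_div_iff₀ (Real.exp_pos _)).1 hδ₀
  have hxS (i : ℕ) (hi : i ≤ n) : x i ∈ cthickening 1 K := self_subset_cthickening K (hxK i hi)
  have hshift (i : ℕ) (hi : i ≤ n) : ‖η i • F (x i)‖ ≤ min ε 1 := calc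
    ‖η i • F (x i)‖ = η i * ‖F (x i)‖ := by rw [norm_smul, Real.norm_of_nonneg (hη0 i)]
    _ ≤ ρ * M := mul_le_mul (by linarith [hη i hi]) (hMF _ (hxS i hi)) (norm_nonneg _) hρ.le
    _ ≤ min ε 1 := by linarith
  refine ⟨fun i => x i + η i • F (x i), by simp [η], fun i hi => ?_, fun i hi => ?_⟩
  · simpa using (hshift i hi).trans (min_le_left _ _)
  · have hyS : x i + η i • F (x i) ∈ cthickening 1 K :=
      mem_cthickening_of_dist_le _ (x i) 1 K (hxK i hi.le) <| by
        simpa [dist_eq_norm] using (hshift i hi.le).trans (min_le_right _ _)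
    have hsmall : L * M * (M * η i + δ) ≤ m ^ 2 / 2 := calc
      L * M * (M * η i + δ) ≤ L * M * (M + 1) * ρ := by
        rw [mul_assoc _ (M + 1)]
        gcongr
        nlinarith [hη i hi.le, hη0 i]
      _ ≤ m ^ 2 / 2 := hρm.le
    simp only [η, perturbRadius_succ]
    exact inner_perturbed_step_pos hL hm.le hmF hMF (hxS i hi.le) (hxS (i + 1) hi) hyS
      (hKF _ (hxK i hi.le) _ (hxK (i + 1) hi)) hδ (hstep i hi) (hη0 i) hsmall hA

end Perturbation

theorem stmt17_general (d : ℕ)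
    (F : EuclideanSpace ℝ (Fin d) → EuclideanSpace ℝ (Fin d))
    (hlip : LocallyLipschitz F)
    (hnv : ∀ x, F x ≠ 0) (p : EuclideanSpace ℝ (Fin d))
    (K : Set (EuclideanSpace ℝ (Fin d))) (hK : IsCompact K)
    (hKsub : K ⊆ frontier (CS F p)) (T : ℝ) :
    ∀ ε > 0, ∃ δ₀ > 0, ∀ δ : ℝ, 0 < δ → δ ≤ δ₀ →
      ∀ (n : ℕ) (x : ℕ → EuclideanSpace ℝ (Fin d)),
        (∀ i ≤ n, x i ∈ K) → (n : ℝ) * δ ≤ 2 * T →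
        (∀ i < n, ‖x (i + 1) - x i‖ = δ) →
        ∃ y : ℕ → EuclideanSpace ℝ (Fin d),
          y 0 = x 0 ∧ (∀ i ≤ n, ‖y i - x i‖ ≤ ε) ∧
          ∀ i < n, 0 < ⟪F (y i), y (i + 1) - y i⟫ := by
  intro ε hε
  have hKF : ∀ a ∈ K, ∀ b ∈ K, 0 ≤ ⟪F b, b - a⟫ := fun a ha b hb =>
    inner_sub_nonneg_of_mem_frontier_CS hlip.continuous (hKsub ha) (hKsub hb)
  obtain ⟨δ₀, hδ₀, hδ₀_spec⟩ := exists_ascending_perturbation hlip hnv hK hKF (2 * T) ε hε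
  exact ⟨δ₀, hδ₀, fun δ hδ hδle n x hxK hnT hstep =>
    hδ₀_spec δ hδ hδle n x hxK hnT fun i hi => (hstep i hi).le⟩

theorem stmt17 (d : ℕ) (hd : 1 ≤ d)
    (F : EuclideanSpace ℝ (Fin d) → EuclideanSpace ℝ (Fin d))
    (hlip : LocallyLipschitz F) (hF : CyclicallyQuasiMonotoneS F)
    (hnv : ∀ x, F x ≠ 0) (p : EuclideanSpace ℝ (Fin d))
    (K : Set (EuclideanSpace ℝ (Fin d))) (hK : IsCompact K)
    (hKsub : K ⊆ frontier (CS F p)) (T : ℝ) (hT : 0 < T) :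
    ∀ ε > 0, ∃ δ₀ > 0, ∀ δ : ℝ, 0 < δ → δ ≤ δ₀ →
      ∀ (n : ℕ) (x : ℕ → EuclideanSpace ℝ (Fin d)),
        (∀ i ≤ n, x i ∈ K) → (n : ℝ) * δ ≤ 2 * T →
        (∀ i < n, ‖x (i + 1) - x i‖ = δ) →
        ∃ y : ℕ → EuclideanSpace ℝ (Fin d),
          y 0 = x 0 ∧ (∀ i ≤ n, ‖y i - x i‖ ≤ ε) ∧
          ∀ i < n, 0 < ⟪F (y i), y (i + 1) - y i⟫ :=
  stmt17_general d F hlip hnv p K hK hKsub T
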